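/- Let d ≥ 1, s ∈ (0,1) and p ∈ [1,∞) with sp < d, and set q = dp/(d − sp). There exists a constant C > 0, depending only on d, s and p, such that for every measurable function f : ℝ^d → ℝ belonging to L^p(ℝ^d) with finite Gagliardo seminorm, one has ‖f‖_{L^q(ℝ^d)} ≤ C ( ‖f‖_{L^p(ℝ^d)} + (∫_{ℝ^d}∫_{ℝ^d} |f(x) − f(y)|^p / |x − y|^{d + sp} dx dy)^{1/p} ). In particular W^{s,p}(ℝ^d) is continuously embedded into L^q(ℝ^d). -/

import Mathlib

open MeasureTheory ENNReal

/-- The `L^p` "norm" of `f : ℝ^d → ℝ` (with real exponent `p`), as a lower integral. -/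
noncomputable def lpNorm' (d : ℕ) (p : ℝ) (f : EuclideanSpace ℝ (Fin d) → ℝ) : ℝ≥0∞ :=
  (∫⁻ x, (ENNReal.ofReal |f x|) ^ p) ^ (1 / p)

/-- The Gagliardo (Sobolev–Slobodeckij) seminorm of order `s`, integrability `p`,
of `f : ℝ^d → ℝ`, computed as a lower integral in `ℝ≥0∞`. -/
noncomputable def gagliardoSeminorm (d : ℕ) (s p : ℝ)
    (f : EuclideanSpace ℝ (Fin d) → ℝ) : ℝ≥0∞ :=
  (∫⁻ x, ∫⁻ y, (ENNReal.ofReal |f x - f y|) ^ p /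
      (ENNReal.ofReal (dist x y)) ^ ((d : ℝ) + s * p)) ^ (1 / p)

open Metric

noncomputable def sobC (d : ℕ) (s p : ℝ) : ℝ≥0∞ :=
  (2 * (2 ^ p * (2 * (1 + (volume (ball (0 : EuclideanSpace ℝ (Fin d)) 1))⁻¹)))) ^
    ((d : ℝ) / ((d : ℝ) - s * p) * (1 / p))


lemma abs_clamp {t n : ℝ} (hn : 0 ≤ n) : |max (min t n) (-n)| = min |t| n := by
  rcases le_total 0 t with h | h
  · have h1 : (0:ℝ) ≤ min t n := le_min h hn
    rw [max_eq_left ((neg_nonpos_of_nonneg hn).trans h1), abs_of_nonneg h1, abs_of_nonneg h]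
  · have h1 : min t n = t := min_eq_left (h.trans hn)
    rw [h1, abs_of_nonpos h]
    have h2 : max t (-n) ≤ 0 := max_le h (neg_nonpos_of_nonneg hn)
    rw [abs_of_nonpos h2]
    have h3 := min_neg_neg t (-n)
    rw [neg_neg] at h3
    rw [← h3]

lemma clamp_lip (n a b : ℝ) : |max (min a n) (-n) - max (min b n) (-n)| ≤ |a - b| := by
  refine (abs_max_sub_max_le_abs _ _ _).trans ?_
  refine ((abs_min_sub_min_le_max a n b n).trans ?_)
  simp

lemma add_rpow_le2 {a b : ℝ≥0∞} {p : ℝ} (hp : 0 ≤ p) : (a + b) ^ p ≤ 2 ^ p * (a ^ p + b ^ p) := by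
  calc (a + b) ^ p ≤ (2 * max a b) ^ p := by
        refine ENNReal.rpow_le_rpow ?_ hp
        rw [two_mul]
        exact add_le_add (le_max_left a b) (le_max_right a b)
    _ = 2 ^ p * (max a b) ^ p := ENNReal.mul_rpow_of_nonneg _ _ hp
    _ ≤ 2 ^ p * (a ^ p + b ^ p) := by
        gcongr
        rcases max_cases a b with ⟨h, _⟩ | ⟨h, _⟩ <;> rw [h]
        · exact le_add_right le_rfl
        · exact le_add_left le_rfl

lemma opt_lemma {A C₂ D M : ℝ≥0∞} {t u : ℝ} (ht : 0 < t) (hu : 0 < u)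
    (hM0 : M ≠ 0) (hMt : M ≠ ⊤) (hC0 : C₂ ≠ 0) (hCt : C₂ ≠ ⊤)
    (h : ∀ R : ℝ≥0∞, R ≠ 0 → R ≠ ⊤ → A ≤ C₂ * (R ^ t * D + M * R ^ (-u))) :
    A ≤ 2 * C₂ * (M ^ (t / (t + u)) * D ^ (u / (t + u))) := by
  have htu : 0 < t + u := by linarith
  rcases eq_or_ne D 0 with hD | hD0
  · -- A = 0
    have hA : A = 0 := by
      refine le_antisymm ?_ (zero_le)
      refine ENNReal.le_of_forall_pos_le_add (fun ε hε _ => ?_)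
      have hε0 : (ε : ℝ≥0∞) ≠ 0 := by exact_mod_cast hε.ne'
      have hεt : (ε : ℝ≥0∞) ≠ ⊤ := coe_ne_top
      set X := C₂ * M / ε with hX
      have hX0 : X ≠ 0 := by
        simp only [hX, ne_eq, ENNReal.div_eq_zero_iff, mul_eq_zero]
        push_neg; exact ⟨⟨hC0, hM0⟩, hεt⟩
      have hXt : X ≠ ⊤ := by
        simp only [hX, ne_eq, ENNReal.div_eq_top]
        push_neg
        exact ⟨fun _ => hε0, fun h' => absurd h' (ENNReal.mul_ne_top hCt hMt)⟩
      set R := X ^ (1 / u) with hR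
      have hR0 : R ≠ 0 := by
        simp [hR, ENNReal.rpow_eq_zero_iff, hX0, hXt]
      have hRt : R ≠ ⊤ := by
        simp [hR, ENNReal.rpow_eq_top_iff, hX0, hXt]
      have hkey := h R hR0 hRt
      rw [hD, mul_zero, zero_add] at hkey
      refine hkey.trans ?_
      have hRu : R ^ (-u) = X⁻¹ := by
        rw [hR, ← ENNReal.rpow_mul, show 1 / u * (-u) = (-1:ℝ) by field_simp,
          ENNReal.rpow_neg_one]
      rw [hRu, zero_add, ← mul_assoc, hX]
      rw [ENNReal.inv_div (Or.inl hεt) (Or.inl hε0)]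
      rw [ENNReal.mul_div_cancel (by simp [hC0, hM0]) (ENNReal.mul_ne_top hCt hMt)]
    rw [hA]; exact zero_le
  · rcases eq_or_ne D ⊤ with hDt | hDt
    · have h1 : D ^ (u / (t + u)) = ⊤ := by
        rw [hDt]; exact ENNReal.top_rpow_of_pos (div_pos hu htu)
      have h2 : M ^ (t / (t + u)) ≠ 0 := by
        simp [ENNReal.rpow_eq_zero_iff, hM0, hMt]
      rw [h1, ENNReal.mul_top h2, ENNReal.mul_top (by simp [hC0])]
      exact le_top
    · set a := t / (t + u) with ha
      set b := u / (t + u) with hb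
      have ha0 : (0:ℝ) ≤ a := by positivity
      have hb0 : (0:ℝ) ≤ b := by positivity
      have hab : a + b = 1 := by rw [ha, hb]; field_simp
      set R := (M / D) ^ (1 / (t + u)) with hR
      have hMD0 : M / D ≠ 0 := by
        simp [ENNReal.div_eq_zero_iff, hM0, hDt]
      have hMDt : M / D ≠ ⊤ := by
        simp [ENNReal.div_eq_top, hMt, hD0]
      have hR0 : R ≠ 0 := by
        simp [hR, ENNReal.rpow_eq_zero_iff, hMD0, hMDt]
      have hRt : R ≠ ⊤ := by
        simp [hR, ENNReal.rpow_eq_top_iff, hMD0, hMDt]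
      have hkey := h R hR0 hRt
      have e1 : R ^ t * D = M ^ a * D ^ b := by
        have h1 : R ^ t = (M / D) ^ a := by
          rw [hR, ← ENNReal.rpow_mul]; congr 1; rw [ha]; field_simp
        rw [h1, ENNReal.div_rpow_of_nonneg _ _ ha0, div_eq_mul_inv, mul_assoc]
        congr 1
        rw [← ENNReal.rpow_neg]
        nth_rewrite 2 [← ENNReal.rpow_one D]
        rw [← ENNReal.rpow_add _ _ hD0 hDt]
        congr 1
        linarith
      have e2 : M * R ^ (-u) = M ^ a * D ^ b := by
        have h1 : R ^ (-u) = (M / D) ^ (-b) := by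
          rw [hR, ← ENNReal.rpow_mul]; congr 1; rw [hb]; field_simp
        have hMb0 : M ^ b ≠ 0 := by simp [ENNReal.rpow_eq_zero_iff, hM0, hMt]
        have hMbt : M ^ b ≠ ⊤ := ENNReal.rpow_ne_top_of_nonneg hb0 hMt
        rw [h1, ENNReal.rpow_neg, ENNReal.div_rpow_of_nonneg _ _ hb0,
          ENNReal.inv_div (Or.inr hMbt) (Or.inr hMb0)]
        rw [div_eq_mul_inv, mul_comm (D ^ b) (M ^ b)⁻¹, ← mul_assoc]
        congr 1
        rw [← ENNReal.rpow_neg]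
        nth_rewrite 1 [← ENNReal.rpow_one M]
        rw [← ENNReal.rpow_add _ _ hM0 hMt]
        congr 1
        linarith
      rw [e1, e2, ← two_mul] at hkey
      refine hkey.trans (le_of_eq ?_)
      ring

lemma key (d : ℕ) (hd : 1 ≤ d) (s p q : ℝ) (hs0 : 0 < s) (hp : 1 ≤ p) (hsp : s * p < d)
    (hq : q = d * p / (d - s * p))
    (f : EuclideanSpace ℝ (Fin d) → ℝ) (hf : Measurable f)
    (hNfin : (∫⁻ x, (ENNReal.ofReal |f x|) ^ q) ≠ ⊤) :
    (∫⁻ x, (ENNReal.ofReal |f x|) ^ q) ^ (1 / q) ≤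
      sobC d s p * (∫⁻ x, ∫⁻ y, (ENNReal.ofReal |f x - f y|) ^ p /
        (ENNReal.ofReal (dist x y)) ^ ((d : ℝ) + s * p)) ^ (1 / p) := by
  haveI : Nonempty (Fin d) := ⟨⟨0, hd⟩⟩
  have hd0 : (0:ℝ) < d := by exact_mod_cast hd
  have hp0 : (0:ℝ) < p := lt_of_lt_of_le one_pos hp
  have hds : (0:ℝ) < (d:ℝ) - s * p := by linarith
  have hsp0 : 0 < s * p := mul_pos hs0 hp0
  have hq0 : (0:ℝ) < q := by rw [hq]; positivity
  have hpq : p < q := by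
    rw [hq, lt_div_iff₀ hds]; nlinarith
  -- real exponent identities
  have hdq : (d:ℝ) * p / q = d - s * p := by
    rw [hq]; field_simp
  set c := volume (ball (0 : EuclideanSpace ℝ (Fin d)) 1) with hc
  have hc0 : c ≠ 0 := (measure_ball_pos _ _ one_pos).ne'
  have hct : c ≠ ⊤ := measure_ball_lt_top.ne
  set F : EuclideanSpace ℝ (Fin d) → ℝ≥0∞ := fun x => ENNReal.ofReal |f x| with hF
  set Dp : EuclideanSpace ℝ (Fin d) → ℝ≥0∞ := fun x => ∫⁻ y,
      (ENNReal.ofReal |f x - f y|) ^ p / (ENNReal.ofReal (dist x y)) ^ ((d : ℝ) + s * p)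
    with hDp
  set Nq := ∫⁻ x, F x ^ q with hNq
  rcases eq_or_ne Nq 0 with hN0 | hN0
  · rw [hN0, ENNReal.zero_rpow_of_pos (by positivity)]; exact zero_le
  set C₂ : ℝ≥0∞ := 2 ^ p * (2 * (1 + c⁻¹)) with hC₂
  have h2p0 : (2:ℝ≥0∞) ^ p ≠ 0 := by simp [ENNReal.rpow_eq_zero_iff]
  have h2pt : (2:ℝ≥0∞) ^ p ≠ ⊤ := by simp [ENNReal.rpow_eq_top_iff]
  have hC₂0 : C₂ ≠ 0 := by
    simp only [hC₂, ne_eq, mul_eq_zero]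
    push_neg
    refine ⟨h2p0, by simp⟩
  have hC₂t : C₂ ≠ ⊤ := by
    refine ENNReal.mul_ne_top h2pt (ENNReal.mul_ne_top (by simp)
      (ENNReal.add_ne_top.mpr ⟨by simp, ENNReal.inv_ne_top.mpr hc0⟩))
  -- measurability helpers
  have hmF : Measurable F := hf.abs.ennreal_ofReal
  have hmFp : Measurable fun y => F y ^ p := hmF.pow_const p
  have hmG : ∀ x, Measurable fun y => (ENNReal.ofReal |f x - f y|) ^ p :=
    fun x => ((measurable_const.sub hf).abs.ennreal_ofReal).pow_const p
  have hmH : ∀ x, Measurable fun y =>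
      (ENNReal.ofReal |f x - f y|) ^ p / (ENNReal.ofReal (dist x y)) ^ ((d : ℝ) + s * p) :=
    fun x => (hmG x).div (((measurable_const.dist measurable_id).ennreal_ofReal).pow_const _)
  -- ball estimate
  have hball : ∀ (x : EuclideanSpace ℝ (Fin d)) (r : ℝ), 0 < r →
      volume (ball x r) * F x ^ p ≤
        2 ^ p * ((ENNReal.ofReal r) ^ ((d:ℝ) + s * p) * Dp x +
          Nq ^ (p / q) * (volume (ball x r)) ^ (1 - p / q)) := by
    intro x r hr
    have hstep1 : volume (ball x r) * F x ^ p = ∫⁻ _ in ball x r, F x ^ p := by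
      rw [setLIntegral_const, mul_comm]
    have hstep2 : (∫⁻ _ in ball x r, F x ^ p) ≤
        ∫⁻ y in ball x r, 2 ^ p * ((ENNReal.ofReal |f x - f y|) ^ p + F y ^ p) := by
      refine lintegral_mono fun y => ?_
      have habs : |f x| ≤ |f x - f y| + |f y| := by
        have := abs_add_le (f x - f y) (f y); simpa using this
      have h1 : F x ≤ ENNReal.ofReal |f x - f y| + F y := by
        rw [hF]
        refine (ENNReal.ofReal_le_ofReal habs).trans ?_
        rw [ENNReal.ofReal_add (abs_nonneg _) (abs_nonneg _)]
      exact (ENNReal.rpow_le_rpow h1 hp0.le).trans (add_rpow_le2 hp0.le)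
    have hstep3 : (∫⁻ y in ball x r, 2 ^ p * ((ENNReal.ofReal |f x - f y|) ^ p + F y ^ p)) =
        2 ^ p * ((∫⁻ y in ball x r, (ENNReal.ofReal |f x - f y|) ^ p) +
          ∫⁻ y in ball x r, F y ^ p) := by
      rw [lintegral_const_mul (f := fun y => (ENNReal.ofReal |f x - f y|) ^ p + F y ^ p) _ ((hmG x).add hmFp), lintegral_add_left (hmG x)]
    -- term A
    have hA : (∫⁻ y in ball x r, (ENNReal.ofReal |f x - f y|) ^ p) ≤
        (ENNReal.ofReal r) ^ ((d:ℝ) + s * p) * Dp x := by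
      have hae : ∀ᵐ y ∂(volume.restrict (ball x r)),
          (ENNReal.ofReal |f x - f y|) ^ p ≤
            (ENNReal.ofReal r) ^ ((d:ℝ) + s * p) *
              ((ENNReal.ofReal |f x - f y|) ^ p /
                (ENNReal.ofReal (dist x y)) ^ ((d:ℝ) + s * p)) := by
        have h1 : ∀ᵐ (y : EuclideanSpace ℝ (Fin d)) ∂volume, y ≠ x := by
          rw [ae_iff]
          have : {y : EuclideanSpace ℝ (Fin d) | ¬ y ≠ x} = {x} := by ext y; simp
          rw [this]; exact measure_singleton x
        filter_upwards [ae_restrict_of_ae h1, ae_restrict_mem measurableSet_ball] with y hy hyb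
        have hdpos : 0 < dist x y := dist_pos.mpr (Ne.symm hy)
        have hdlt : dist x y < r := by rw [dist_comm]; exact mem_ball.mp hyb
        set b := (ENNReal.ofReal (dist x y)) ^ ((d:ℝ) + s * p) with hb
        have hb0 : b ≠ 0 :=
          (ENNReal.rpow_pos (ENNReal.ofReal_pos.mpr hdpos) ENNReal.ofReal_ne_top).ne'
        have hbt : b ≠ ⊤ :=
          ENNReal.rpow_ne_top_of_nonneg (by positivity) ENNReal.ofReal_ne_top
        calc (ENNReal.ofReal |f x - f y|) ^ p
            = ((ENNReal.ofReal |f x - f y|) ^ p / b) * b :=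
              (ENNReal.div_mul_cancel hb0 hbt).symm
          _ ≤ ((ENNReal.ofReal |f x - f y|) ^ p / b) * (ENNReal.ofReal r) ^ ((d:ℝ) + s * p) := by
              gcongr
              exact ENNReal.rpow_le_rpow (ENNReal.ofReal_le_ofReal hdlt.le) (by positivity)
          _ = (ENNReal.ofReal r) ^ ((d:ℝ) + s * p) * ((ENNReal.ofReal |f x - f y|) ^ p / b) :=
              mul_comm _ _
      refine (lintegral_mono_ae hae).trans ?_
      rw [lintegral_const_mul _ (hmH x)]
      exact mul_le_mul_right (setLIntegral_le_lintegral _ _) _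
    -- term B (Hölder)
    have hB : (∫⁻ y in ball x r, F y ^ p) ≤ Nq ^ (p / q) * (volume (ball x r)) ^ (1 - p / q) := by
      have hconj : (q / p).HolderConjugate (q / (q - p)) := by
        rw [Real.holderConjugate_iff]
        constructor
        · rw [lt_div_iff₀ hp0]; linarith
        · rw [inv_div, inv_div, ← add_div, div_eq_one_iff_eq hq0.ne']
          ring
      have hH := ENNReal.lintegral_mul_le_Lp_mul_Lq (volume.restrict (ball x r)) hconj
        (hmFp.aemeasurable) (aemeasurable_const (b := (1:ℝ≥0∞)))
      simp only [Pi.mul_apply, mul_one, ENNReal.one_rpow] at hH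
      rw [lintegral_one, Measure.restrict_apply_univ] at hH
      have he1 : ∀ y, (F y ^ p) ^ (q / p) = F y ^ q := by
        intro y
        rw [← ENNReal.rpow_mul]
        congr 1
        field_simp
      simp only [he1] at hH
      rw [show (1:ℝ)/(q/p) = p/q by rw [one_div_div],
        show (1:ℝ)/(q/(q-p)) = 1 - p/q by rw [one_div_div, sub_div, div_self hq0.ne']] at hH
      exact hH.trans (mul_le_mul_left
        (ENNReal.rpow_le_rpow (setLIntegral_le_lintegral _ _) (by positivity)) _)
    calc volume (ball x r) * F x ^ p = ∫⁻ _ in ball x r, F x ^ p := hstep1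
      _ ≤ ∫⁻ y in ball x r, 2 ^ p * ((ENNReal.ofReal |f x - f y|) ^ p + F y ^ p) := hstep2
      _ = 2 ^ p * ((∫⁻ y in ball x r, (ENNReal.ofReal |f x - f y|) ^ p) +
          ∫⁻ y in ball x r, F y ^ p) := hstep3
      _ ≤ 2 ^ p * ((ENNReal.ofReal r) ^ ((d:ℝ) + s * p) * Dp x +
          Nq ^ (p / q) * (volume (ball x r)) ^ (1 - p / q)) := by gcongr
  -- normalized pointwise bound
  have hM0 : Nq ^ (p/q) ≠ 0 := by
    simp [ENNReal.rpow_eq_zero_iff, hN0, hNfin]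
  have hMt : Nq ^ (p/q) ≠ ⊤ := ENNReal.rpow_ne_top_of_nonneg (by positivity) hNfin
  have hnorm : ∀ x, ∀ R : ℝ≥0∞, R ≠ 0 → R ≠ ⊤ →
      F x ^ p ≤ C₂ * (R ^ (s*p) * Dp x + Nq ^ (p/q) * R ^ (-((d:ℝ) - s*p))) := by
    intro x R hR0 hRt
    set r := R.toReal with hr'
    have hr : 0 < r := ENNReal.toReal_pos hR0 hRt
    have hRr : ENNReal.ofReal r = R := ENNReal.ofReal_toReal hRt
    have hvol : volume (ball x r) = c * R ^ ((d:ℝ)) := by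
      rw [Measure.addHaar_ball volume x hr.le]
      simp only [finrank_euclideanSpace_fin]
      rw [ENNReal.ofReal_pow hr.le, ← ENNReal.rpow_natCast, hRr, mul_comm]
    have hb := hball x r hr
    rw [hvol, hRr] at hb
    have hcR0 : c * R ^ ((d:ℝ)) ≠ 0 := by
      simp [hc0, ENNReal.rpow_eq_zero_iff, hR0, hRt]
    have hcRt : c * R ^ ((d:ℝ)) ≠ ⊤ :=
      ENNReal.mul_ne_top hct (ENNReal.rpow_ne_top_of_nonneg (by positivity) hRt)
    rw [← ENNReal.mul_le_mul_iff_right hcR0 hcRt]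
    refine hb.trans ?_
    have hfac1 : (1:ℝ≥0∞) ≤ c * (2*(1+c⁻¹)) := by
      calc (1:ℝ≥0∞) = c * c⁻¹ := (ENNReal.mul_inv_cancel hc0 hct).symm
        _ ≤ c * (2*(1+c⁻¹)) := by
            gcongr
            calc c⁻¹ ≤ 1 + c⁻¹ := le_add_self
              _ ≤ 2*(1+c⁻¹) := le_mul_of_one_le_left (zero_le) one_le_two
    have term1 : 2^p * (R ^ ((d:ℝ) + s * p) * Dp x) ≤
        (c * R ^ ((d:ℝ))) * (C₂ * (R ^ (s*p) * Dp x)) := by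
      calc 2^p * (R ^ ((d:ℝ) + s * p) * Dp x)
          = 1 * (2^p * (R ^ ((d:ℝ)) * R ^ (s*p) * Dp x)) := by
            rw [ENNReal.rpow_add _ _ hR0 hRt]; ring
        _ ≤ (c * (2*(1+c⁻¹))) * (2^p * (R ^ ((d:ℝ)) * R ^ (s*p) * Dp x)) :=
            mul_le_mul_left hfac1 _
        _ = (c * R ^ ((d:ℝ))) * (C₂ * (R ^ (s*p) * Dp x)) := by rw [hC₂]; ring
    have hpq1 : (0:ℝ) ≤ 1 - p/q := by
      rw [sub_nonneg, div_le_one hq0]; exact hpq.le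
    have hid : (d:ℝ)*(1-p/q) = s*p := by
      rw [mul_sub, mul_one, mul_div_assoc', hdq]; ring
    have e4 : R ^ ((d:ℝ)) * R ^ (-((d:ℝ) - s*p)) = R ^ (s*p) := by
      rw [← ENNReal.rpow_add _ _ hR0 hRt]; congr 1; ring
    have hcb : c ^ (-(p/q)) ≤ 1 + c⁻¹ := by
      rcases le_total c 1 with h | h
      · calc c ^ (-(p/q)) ≤ c ^ (-1:ℝ) := by
              refine ENNReal.rpow_le_rpow_of_exponent_ge h ?_
              rw [neg_le_neg_iff, div_le_one hq0]; exact hpq.le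
          _ = c⁻¹ := ENNReal.rpow_neg_one c
          _ ≤ 1 + c⁻¹ := le_add_self
      · calc c ^ (-(p/q)) = (c ^ (p/q))⁻¹ := ENNReal.rpow_neg c _
          _ ≤ 1 := by
              rw [ENNReal.inv_le_one]
              calc (1:ℝ≥0∞) = 1 ^ (p/q) := (ENNReal.one_rpow _).symm
                _ ≤ c ^ (p/q) := ENNReal.rpow_le_rpow h (by positivity)
          _ ≤ 1 + c⁻¹ := le_self_add
    have term2 : 2^p * (Nq ^ (p/q) * (c * R ^ ((d:ℝ))) ^ (1 - p/q)) ≤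
        (c * R ^ ((d:ℝ))) * (C₂ * (Nq ^ (p/q) * R ^ (-((d:ℝ) - s*p)))) := by
      calc 2^p * (Nq ^ (p/q) * (c * R ^ ((d:ℝ))) ^ (1 - p/q))
          = (c * c ^ (-(p/q))) * (2^p * (Nq ^ (p/q) * R ^ (s*p))) := by
            rw [ENNReal.mul_rpow_of_nonneg _ _ hpq1, ← ENNReal.rpow_mul, hid,
              show (1:ℝ) - p/q = 1 + -(p/q) by ring, ENNReal.rpow_add _ _ hc0 hct,
              ENNReal.rpow_one]
            ring
        _ ≤ (c * (2*(1+c⁻¹))) * (2^p * (Nq ^ (p/q) * R ^ (s*p))) := by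
            gcongr
            exact hcb.trans (le_mul_of_one_le_left (zero_le) one_le_two)
        _ = (c * R ^ ((d:ℝ))) * (C₂ * (Nq ^ (p/q) * R ^ (-((d:ℝ) - s*p)))) := by
            rw [hC₂, ← e4]; ring
    calc 2 ^ p * (R ^ ((d:ℝ) + s * p) * Dp x +
          Nq ^ (p / q) * (c * R ^ ((d:ℝ))) ^ (1 - p / q))
        = 2^p * (R ^ ((d:ℝ) + s * p) * Dp x) +
          2^p * (Nq ^ (p/q) * (c * R ^ ((d:ℝ))) ^ (1 - p/q)) := mul_add _ _ _
      _ ≤ (c * R ^ ((d:ℝ))) * (C₂ * (R ^ (s*p) * Dp x)) +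
          (c * R ^ ((d:ℝ))) * (C₂ * (Nq ^ (p/q) * R ^ (-((d:ℝ) - s*p)))) :=
          add_le_add term1 term2
      _ = (c * R ^ ((d:ℝ))) * (C₂ * (R ^ (s*p) * Dp x +
          Nq ^ (p/q) * R ^ (-((d:ℝ) - s*p)))) := by ring
  -- optimize in R
  have hpt : ∀ x, F x ^ q ≤ ((2*C₂) ^ (q/p) * Nq ^ (s*p/(d:ℝ))) * Dp x := by
    intro x
    have h1 := opt_lemma hsp0 hds hM0 hMt hC₂0 hC₂t (hnorm x)
    rw [show s*p + ((d:ℝ) - s*p) = (d:ℝ) by ring, ← ENNReal.rpow_mul Nq] at h1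
    have h2 := ENNReal.rpow_le_rpow h1 (le_of_lt (div_pos hq0 hp0))
    rw [← ENNReal.rpow_mul (F x), show p * (q/p) = q by field_simp] at h2
    have heq : (2 * C₂ * (Nq ^ (p/q * (s*p/(d:ℝ))) * Dp x ^ (((d:ℝ) - s*p)/(d:ℝ)))) ^ (q/p)
        = ((2*C₂) ^ (q/p) * Nq ^ (s*p/(d:ℝ))) * Dp x := by
      rw [ENNReal.mul_rpow_of_nonneg (2*C₂) _ (by positivity : (0:ℝ) ≤ q/p),
        ENNReal.mul_rpow_of_nonneg (Nq ^ (p/q * (s*p/(d:ℝ))))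
          (Dp x ^ (((d:ℝ) - s*p)/(d:ℝ))) (by positivity : (0:ℝ) ≤ q/p),
        ← ENNReal.rpow_mul Nq, ← ENNReal.rpow_mul (Dp x),
        show p/q * (s*p/(d:ℝ)) * (q/p) = s*p/(d:ℝ) by field_simp,
        show ((d:ℝ) - s*p)/(d:ℝ) * (q/p) = 1 by rw [← hdq]; field_simp,
        ENNReal.rpow_one, mul_assoc]
    exact h2.trans_eq heq
  -- integrate
  set Kp := ∫⁻ x, ∫⁻ y, (ENNReal.ofReal |f x - f y|) ^ p /
      (ENNReal.ofReal (dist x y)) ^ ((d : ℝ) + s * p) with hKp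
  have hC4t : (2*C₂) ^ (q/p) ≠ ⊤ :=
    ENNReal.rpow_ne_top_of_nonneg (by positivity) (ENNReal.mul_ne_top (by simp) hC₂t)
  have hNst : Nq ^ (s*p/(d:ℝ)) ≠ ⊤ := ENNReal.rpow_ne_top_of_nonneg (by positivity) hNfin
  have hint : Nq ≤ ((2*C₂) ^ (q/p) * Nq ^ (s*p/(d:ℝ))) * Kp := by
    rw [hNq]
    calc (∫⁻ x, F x ^ q) ≤ ∫⁻ x, ((2*C₂) ^ (q/p) * Nq ^ (s*p/(d:ℝ))) * Dp x :=
          lintegral_mono hpt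
      _ = ((2*C₂) ^ (q/p) * Nq ^ (s*p/(d:ℝ))) * Kp :=
          lintegral_const_mul' _ _ (ENNReal.mul_ne_top hC4t hNst)
  have hdiv : Nq ^ (1 - s*p/(d:ℝ)) ≤ (2*C₂) ^ (q/p) * Kp := by
    rw [ENNReal.rpow_sub _ _ hN0 hNfin, ENNReal.rpow_one]
    refine ENNReal.div_le_of_le_mul ?_
    calc Nq ≤ ((2*C₂) ^ (q/p) * Nq ^ (s*p/(d:ℝ))) * Kp := hint
      _ = ((2*C₂) ^ (q/p) * Kp) * Nq ^ (s*p/(d:ℝ)) := by ring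
  have h3 := ENNReal.rpow_le_rpow hdiv (by positivity : (0:ℝ) ≤ 1/p)
  rw [← ENNReal.rpow_mul,
    show (1 - s*p/(d:ℝ)) * (1/p) = 1/q by
      rw [show (1:ℝ) - s*p/(d:ℝ) = ((d:ℝ) - s*p)/(d:ℝ) by field_simp, ← hdq]
      field_simp,
    ENNReal.mul_rpow_of_nonneg _ _ (by positivity : (0:ℝ) ≤ 1/p),
    ← ENNReal.rpow_mul] at h3
  refine h3.trans (le_of_eq ?_)
  have hCeq : (2*C₂) ^ (q/p*(1/p)) = sobC d s p := by
    rw [hC₂, hc]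
    unfold sobC
    congr 1
    rw [hq]
    field_simp
  rw [hCeq]

/-- **Fractional Sobolev embedding** (Theorem 4.5, whole-space form):
for `d ≥ 1`, `s ∈ (0,1)`, `p ∈ [1,∞)` with `sp < d` and `q = dp/(d - sp)`, there is
`C > 0` depending only on `d, s, p` such that every measurable `f ∈ L^p(ℝ^d)` with
finite Gagliardo seminorm satisfies
`‖f‖_{L^q} ≤ C (‖f‖_{L^p} + [f]_{W^{s,p}})`; in particular `W^{s,p}(ℝ^d) ↪ L^q(ℝ^d)`. -/
theorem fractional_sobolev_embedding (d : ℕ) (hd : 1 ≤ d) (s p : ℝ)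
    (hs0 : 0 < s) (hs1 : s < 1) (hp : 1 ≤ p) (hsp : s * p < d) :
    ∃ C : ℝ, 0 < C ∧ ∀ f : EuclideanSpace ℝ (Fin d) → ℝ, Measurable f →
      lpNorm' d p f < ⊤ →
      gagliardoSeminorm d s p f < ⊤ →
      lpNorm' d ((d : ℝ) * p / ((d : ℝ) - s * p)) f ≤
        ENNReal.ofReal C * (lpNorm' d p f + gagliardoSeminorm d s p f) := by
  have hd0 : (0:ℝ) < d := by exact_mod_cast hd
  have hp0 : (0:ℝ) < p := lt_of_lt_of_le one_pos hp
  have hds : (0:ℝ) < (d:ℝ) - s * p := by linarith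
  have hq0 : (0:ℝ) < (d : ℝ) * p / ((d : ℝ) - s * p) := by positivity
  set q : ℝ := (d : ℝ) * p / ((d : ℝ) - s * p) with hqdef
  have hpq : p < q := by
    rw [hqdef, lt_div_iff₀ hds]; nlinarith [mul_pos (mul_pos hs0 hp0) hp0]
  have hsob_t : sobC d s p ≠ ⊤ := by
    refine ENNReal.rpow_ne_top_of_nonneg (by positivity) ?_
    refine ENNReal.mul_ne_top (by simp) (ENNReal.mul_ne_top ?_ (ENNReal.mul_ne_top (by simp) ?_))
    · simp [ENNReal.rpow_eq_top_iff]
    · exact ENNReal.add_ne_top.mpr ⟨by simp,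
        ENNReal.inv_ne_top.mpr (measure_ball_pos _ _ one_pos).ne'⟩
  refine ⟨(sobC d s p).toReal + 1, by positivity, ?_⟩
  intro f hf hLp hGag
  have hsob_le : sobC d s p ≤ ENNReal.ofReal ((sobC d s p).toReal + 1) := by
    conv_lhs => rw [← ENNReal.ofReal_toReal hsob_t]
    exact ENNReal.ofReal_le_ofReal (by linarith [ENNReal.toReal_nonneg (a := sobC d s p)])
  have hIp : (∫⁻ x, (ENNReal.ofReal |f x|) ^ p) ≠ ⊤ := by
    intro h
    rw [lpNorm', h, ENNReal.top_rpow_of_pos (by positivity)] at hLp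
    exact absurd hLp (lt_irrefl _)
  -- truncations
  set fn : ℕ → EuclideanSpace ℝ (Fin d) → ℝ :=
    fun n x => max (min (f x) (n : ℝ)) (-(n : ℝ)) with hfn
  have hfn_meas : ∀ n, Measurable (fn n) :=
    fun n => (hf.min measurable_const).max measurable_const
  have habs : ∀ n x, |fn n x| = min |f x| (n : ℝ) :=
    fun n x => abs_clamp (Nat.cast_nonneg n)
  have hNfin : ∀ n, (∫⁻ x, (ENNReal.ofReal |fn n x|) ^ q) ≠ ⊤ := by
    intro n
    have hpt : ∀ x, (ENNReal.ofReal |fn n x|) ^ q ≤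
        (ENNReal.ofReal (n:ℝ)) ^ (q - p) * (ENNReal.ofReal |f x|) ^ p := by
      intro x
      set a := ENNReal.ofReal |fn n x| with ha
      rcases eq_or_ne a 0 with h | h
      · rw [h, ENNReal.zero_rpow_of_pos (by positivity)]; exact zero_le
      · have h1 : a ≤ ENNReal.ofReal (n:ℝ) := by
          rw [ha]; exact ENNReal.ofReal_le_ofReal ((habs n x).le.trans (min_le_right _ _))
        have h2 : a ≤ ENNReal.ofReal |f x| := by
          rw [ha]; exact ENNReal.ofReal_le_ofReal ((habs n x).le.trans (min_le_left _ _))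
        calc a ^ q = a ^ (q - p) * a ^ p := by
              rw [← ENNReal.rpow_add _ _ h ENNReal.ofReal_ne_top]; congr 1; ring
          _ ≤ (ENNReal.ofReal (n:ℝ)) ^ (q - p) * (ENNReal.ofReal |f x|) ^ p :=
              mul_le_mul' (ENNReal.rpow_le_rpow h1 (by linarith)) (ENNReal.rpow_le_rpow h2 hp0.le)
    have hle := lintegral_mono (μ := volume) hpt
    rw [lintegral_const_mul' _ _ (ENNReal.rpow_ne_top_of_nonneg (by linarith)
      ENNReal.ofReal_ne_top)] at hle
    exact (hle.trans_lt (ENNReal.mul_lt_top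
      (ENNReal.rpow_ne_top_of_nonneg (by linarith) ENNReal.ofReal_ne_top).lt_top
      hIp.lt_top)).ne
  have hgag_le : ∀ n, gagliardoSeminorm d s p (fn n) ≤ gagliardoSeminorm d s p f := by
    intro n
    unfold gagliardoSeminorm
    refine ENNReal.rpow_le_rpow ?_ (by positivity)
    refine lintegral_mono fun x => lintegral_mono fun y => ?_
    refine ENNReal.div_le_div_right ?_ _
    exact ENNReal.rpow_le_rpow (ENNReal.ofReal_le_ofReal (clamp_lip _ _ _)) hp0.le
  have hkey : ∀ n, (∫⁻ x, (ENNReal.ofReal |fn n x|) ^ q) ^ (1/q) ≤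
      sobC d s p * gagliardoSeminorm d s p f := by
    intro n
    refine (key d hd s p q hs0 hp hsp hqdef (fn n) (hfn_meas n) (hNfin n)).trans ?_
    exact mul_le_mul_right (hgag_le n) _
  -- monotone convergence
  have hmono : Monotone (fun n => fun x => (ENNReal.ofReal |fn n x|) ^ q) := by
    intro m n hmn
    refine fun x => ENNReal.rpow_le_rpow (ENNReal.ofReal_le_ofReal ?_) hq0.le
    rw [habs, habs]
    exact min_le_min le_rfl (Nat.cast_le.mpr hmn)
  have hsup : (∫⁻ x, (ENNReal.ofReal |f x|) ^ q) =
      ⨆ n, ∫⁻ x, (ENNReal.ofReal |fn n x|) ^ q := by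
    rw [← lintegral_iSup (fun n => ((hfn_meas n).abs.ennreal_ofReal).pow_const q) hmono]
    refine lintegral_congr fun x => ?_
    refine le_antisymm ?_ ?_
    · have : (ENNReal.ofReal |f x|) ^ q = (ENNReal.ofReal |fn ⌈|f x|⌉₊ x|) ^ q := by
        rw [habs, min_eq_left (Nat.le_ceil _)]
      rw [this]
      exact le_iSup (fun n => (ENNReal.ofReal |fn n x|) ^ q) ⌈|f x|⌉₊
    · exact iSup_le fun n => ENNReal.rpow_le_rpow
        (ENNReal.ofReal_le_ofReal ((habs n x).le.trans (min_le_left _ _))) hq0.le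
  have hfinal : lpNorm' d q f ≤ sobC d s p * gagliardoSeminorm d s p f := by
    unfold lpNorm'
    rw [hsup]
    have hB : (⨆ n, ∫⁻ x, (ENNReal.ofReal |fn n x|) ^ q) ≤
        (sobC d s p * gagliardoSeminorm d s p f) ^ q := by
      refine iSup_le fun n => ?_
      have := ENNReal.rpow_le_rpow (hkey n) hq0.le
      rw [← ENNReal.rpow_mul, one_div, inv_mul_cancel₀ hq0.ne', ENNReal.rpow_one] at this
      exact this
    refine (ENNReal.rpow_le_rpow hB (by positivity)).trans (le_of_eq ?_)
    rw [← ENNReal.rpow_mul, mul_one_div, div_self hq0.ne', ENNReal.rpow_one]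
  refine hfinal.trans ?_
  exact mul_le_mul' hsob_le le_add_self
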